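/- Let r, s ≥ 1 be fixed integers and let P(x) = Σ_{j=1}^{r−1} P_{0,r,s,a,j}(x) + Σ_{j=1}^{s−1} (−1)^j P_{0,r,s,b,j}(x), a polynomial of degree ≤ r+s−1 independent of n, where P_{0,r,s,a,j} (resp. P_{0,r,s,b,j}) is the unique polynomial of degree ≤ r+s−1 whose k-th derivative divided by k! equals δ_{kj}/j! at a for k = 0,…,r−1 and vanishes to order s at b (resp. equals δ_{kj}/j! at b for k = 0,…,s−1 and vanishes to order r at a). Then P is nonnegative on [a,b], and for every n ≥ 0 and every quadrature Q_{n,r,s} satisfying the exactness hypothesis with weights λ_0^{(j)}(n), λ_j(n), λ_{n+1}^{(j)}(n), one has Σ_{j=1}^{r−1} λ_0^{(j)}(n) + Σ_{j=1}^{s−1} λ_{n+1}^{(j)}(n) ≤ ∫ P(t) dλ(t). -/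

import Mathlib

/-!
The conditions on `pA j` and `pB j` determine them uniquely among polynomials of degree
`< r + s`, and they can be written down: with `u = (x - a) / (b - a)`,
`pA j = (x - a)^j / j! · (1 - u)^s · T(u)`, where `T` is the truncation below degree `r - j` of
the binomial series `(1 - u)^(-s) = ∑ C(s+i-1, i) uⁱ`, and symmetrically for `pB j`. All factors
are nonnegative on `[a, b]`, which gives `P ≥ 0` there.

Exactness on `(x - a)^r (b - x)^s ∏_{k ≠ i} (x - τ_k)²` forces every interior weight to be
nonnegative. Applying the quadrature to `P`, whose derivatives at `a` and `b` are chosen so that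
the boundary terms add up to exactly the tail weights, then gives
`∑ tail weights = ∫ P dλ - ∑ λ_k P(τ_k) ≤ ∫ P dλ`.
-/

open MeasureTheory

/-- The generalized Gauss–Radau/Gauss–Lobatto quadrature
`Q_{n,r,s}(f) = Σ_{j<r} λ₀^{(j)} f^{(j)}(a) + Σ_{j<n} λ_j f(τ_j) + Σ_{j<s} (-1)^j λ_{n+1}^{(j)} f^{(j)}(b)`,
where derivatives are taken within `[a,b]`. -/
noncomputable def quad (a b : ℝ) (n r s : ℕ) (τ w0 wi w1 : ℕ → ℝ) (f : ℝ → ℝ) : ℝ :=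
  (∑ j ∈ Finset.range r, w0 j * iteratedDerivWithin j f (Set.Icc a b) a)
  + (∑ j ∈ Finset.range n, wi j * f (τ j))
  + (∑ j ∈ Finset.range s, (-1 : ℝ) ^ j * w1 j * iteratedDerivWithin j f (Set.Icc a b) b)

open Polynomial Finset
open scoped Nat

namespace Polynomial

theorem iteratedDeriv_eval {𝕜 : Type*} [NontriviallyNormedField 𝕜] (p : 𝕜[X]) (k : ℕ) :
    iteratedDeriv k (fun t => p.eval t) = fun t => (derivative^[k] p).eval t := by
  induction k generalizing p with
  | zero => rfl
  | succ k ih =>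
    have hderiv : _root_.deriv (fun t => p.eval t) = fun t => p.derivative.eval t := by
      funext t; exact p.deriv
    rw [iteratedDeriv_succ', hderiv, ih, Function.iterate_succ_apply]

theorem iteratedDeriv_eval_eq_factorial_mul_taylor_coeff {𝕜 : Type*} [NontriviallyNormedField 𝕜]
    (p : 𝕜[X]) (k : ℕ) (c : 𝕜) :
    iteratedDeriv k (fun t => p.eval t) c = k ! * (taylor c p).coeff k := by
  rw [iteratedDeriv_eval, taylor_coeff, ← factorial_smul_hasseDeriv]
  simp [nsmul_eq_mul]

theorem iteratedDeriv_eval_div_factorial {𝕜 : Type*} [NontriviallyNormedField 𝕜] [CharZero 𝕜]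
    (p : 𝕜[X]) (k : ℕ) (c : 𝕜) :
    iteratedDeriv k (fun t => p.eval t) c / k ! = (taylor c p).coeff k := by
  rw [iteratedDeriv_eval_eq_factorial_mul_taylor_coeff,
    mul_div_cancel_left₀ _ (Nat.cast_ne_zero.mpr k.factorial_ne_zero)]

theorem iteratedDerivWithin_eval {𝕜 : Type*} [NontriviallyNormedField 𝕜] (p : 𝕜[X]) (k : ℕ)
    {s : Set 𝕜} (hs : UniqueDiffOn 𝕜 s) {x : 𝕜} (hx : x ∈ s) :
    iteratedDerivWithin k (fun t => p.eval t) s x = iteratedDeriv k (fun t => p.eval t) x :=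
  iteratedDerivWithin_eq_iteratedDeriv hs (p.contDiff_aeval k).contDiffAt hx

theorem X_sub_C_pow_dvd_iff_taylor_coeff {R : Type*} [CommRing R] {c : R} {m : ℕ} {p : R[X]} :
    (X - C c) ^ m ∣ p ↔ ∀ k < m, (taylor c p).coeff k = 0 := by
  rw [← X_pow_dvd_iff, ← map_dvd_iff (taylorEquiv c), map_pow, map_sub]
  change (taylor c X - taylor c (C c)) ^ m ∣ taylor c p ↔ _
  rw [taylor_X, taylor_C, add_sub_cancel_right]

theorem eq_of_X_sub_C_pow_dvd_sub {K : Type*} [Field K] {a b : K} (hab : a ≠ b) {r s : ℕ}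
    {p q : K[X]} (hp : p.natDegree < r + s) (hq : q.natDegree < r + s)
    (ha : (X - C a) ^ r ∣ p - q) (hb : (X - C b) ^ s ∣ p - q) : p = q := by
  have hcop : IsCoprime ((X - C a) ^ r) ((X - C b) ^ s) :=
    (isCoprime_X_sub_C_of_isUnit_sub (sub_ne_zero_of_ne hab).isUnit).pow
  by_contra hne
  have hdeg := natDegree_le_of_dvd (hcop.mul_dvd ha hb) (sub_ne_zero_of_ne hne)
  rw [natDegree_mul (by simp [X_sub_C_ne_zero]) (by simp [X_sub_C_ne_zero]), natDegree_pow,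
    natDegree_pow, natDegree_X_sub_C, natDegree_X_sub_C] at hdeg
  have := natDegree_sub_le p q
  omega

end Polynomial

namespace PowerSeries

theorem X_pow_dvd_one_sub_X_pow_mul_trunc_invOneSubPow_sub_one (R : Type*) [CommRing R]
    (m s : ℕ) :
    (Polynomial.X : R[X]) ^ m ∣ (1 - Polynomial.X) ^ s * trunc m (invOneSubPow R s).val - 1 := by
  refine Polynomial.X_pow_dvd_iff.mpr fun d hd => ?_
  rw [← Polynomial.coeff_coe, ← coeff_coe_trunc_of_lt hd]
  push_cast
  rw [trunc_sub, trunc_mul_trunc, ← invOneSubPow_inv_eq_one_sub_pow, Units.inv_val, sub_self,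
    Polynomial.coeff_zero]

theorem coeff_invOneSubPow_nonneg {R : Type*} [CommRing R] [PartialOrder R] [IsOrderedRing R]
    (s n : ℕ) : 0 ≤ coeff n (invOneSubPow R s).val := by
  cases s with
  | zero => rw [invOneSubPow_zero, Units.val_one, coeff_one]; split_ifs <;> simp
  | succ d => rw [invOneSubPow_val_succ_eq_mk_add_choose, coeff_mk]; exact Nat.cast_nonneg _

theorem eval_trunc_invOneSubPow_nonneg {R : Type*} [CommRing R] [PartialOrder R]
    [IsOrderedRing R] (m s : ℕ) {x : R} (hx : 0 ≤ x) :
    0 ≤ (trunc m (invOneSubPow R s).val).eval x := by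
  rw [eval_eq_sum_range]
  refine sum_nonneg fun i _ => mul_nonneg ?_ (pow_nonneg hx i)
  rw [coeff_trunc]
  split_ifs
  exacts [coeff_invOneSubPow_nonneg s i, le_rfl]

end PowerSeries

namespace Polynomial

variable {K : Type*} [Field K]

/-- The Hermite basis polynomial `P_{0,r,s,a,j}` for the nodes `a` (multiplicity `r`) and `b`
(multiplicity `s`). With `u = (X - a) / (b - a)`, the factor `(1 - u)^s` vanishes to order `s` at
`b`, and the truncated series `T(u)` of `(1 - u)^(-s)` cancels it to order `r - j` at `a`. -/
noncomputable def hermiteBasis (a b : K) (r s j : ℕ) : K[X] :=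
  C (j ! : K)⁻¹ * (X - C a) ^ j * ((1 - C (b - a)⁻¹ * (X - C a)) ^ s *
    (PowerSeries.trunc (r - j) (PowerSeries.invOneSubPow K s).val).comp (C (b - a)⁻¹ * (X - C a)))

theorem X_sub_C_pow_dvd_hermiteBasis_sub (a b : K) (r s j : ℕ) :
    (X - C a) ^ r ∣ hermiteBasis a b r s j - C (j ! : K)⁻¹ * (X - C a) ^ j := by
  set u : K[X] := C (b - a)⁻¹ * (X - C a)
  set T := PowerSeries.trunc (r - j) (PowerSeries.invOneSubPow K s).val
  have hu : u ^ (r - j) ∣ (1 - u) ^ s * T.comp u - 1 := by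
    simpa using _root_.map_dvd (compRingHom u)
      (PowerSeries.X_pow_dvd_one_sub_X_pow_mul_trunc_invOneSubPow_sub_one K (r - j) s)
  have hX : (X - C a) ^ (r - j) ∣ u ^ (r - j) := by
    rw [mul_pow]; exact dvd_mul_left _ _
  calc (X - C a) ^ r ∣ (X - C a) ^ (j + (r - j)) := pow_dvd_pow _ (by omega)
    _ ∣ C (j ! : K)⁻¹ * (X - C a) ^ j * ((1 - u) ^ s * T.comp u - 1) := by
      rw [pow_add]; exact mul_dvd_mul (dvd_mul_left _ _) (hX.trans hu)
    _ = _ := by rw [hermiteBasis]; ring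

theorem X_sub_C_pow_dvd_hermiteBasis {a b : K} (hab : a ≠ b) (r s j : ℕ) :
    (X - C b) ^ s ∣ hermiteBasis a b r s j := by
  have hc : C (b - a)⁻¹ * (C b - C a) = (1 : K[X]) := by
    rw [← C_sub, ← C_mul, inv_mul_cancel₀ (sub_ne_zero.mpr hab.symm), C_1]
  have h : X - C b ∣ 1 - C (b - a)⁻¹ * (X - C a) :=
    ⟨-C (b - a)⁻¹, by linear_combination -hc⟩
  rw [hermiteBasis]
  exact ((pow_dvd_pow_of_dvd h s).mul_right _).mul_left _

theorem natDegree_hermiteBasis_lt (a b : K) {r j : ℕ} (s : ℕ) (hj : j < r) :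
    (hermiteBasis a b r s j).natDegree < r + s := by
  have hu : (C (b - a)⁻¹ * (X - C a)).natDegree ≤ 1 :=
    (natDegree_C_mul_le _ _).trans (natDegree_X_sub_C a).le
  have hT : (PowerSeries.trunc (r - j) (PowerSeries.invOneSubPow K s).val).natDegree
      ≤ r - j - 1 := by
    have := PowerSeries.natDegree_trunc_lt (PowerSeries.invOneSubPow K s).val (r - j - 1)
    rw [show r - j - 1 + 1 = r - j by omega] at this
    omega
  have : (hermiteBasis a b r s j).natDegree ≤ 0 + j * 1 + (s * 1 + (r - j - 1) * 1) :=
    natDegree_mul_le_of_le (natDegree_mul_le_of_le (natDegree_C _).le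
      (natDegree_pow_le_of_le j (natDegree_X_sub_C a).le))
      (natDegree_mul_le_of_le (natDegree_pow_le_of_le s ((natDegree_sub_le _ _).trans
        (max_le (natDegree_one.trans_le zero_le_one) hu)))
        (natDegree_comp_le.trans (Nat.mul_le_mul hT hu)))
  omega

theorem coeff_taylor_hermiteBasis_left (a b : K) {r k : ℕ} (s j : ℕ) (hk : k < r) :
    (taylor a (hermiteBasis a b r s j)).coeff k = (if k = j then 1 else 0) / j ! := by
  have := X_sub_C_pow_dvd_iff_taylor_coeff.mp (X_sub_C_pow_dvd_hermiteBasis_sub a b r s j) k hk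
  rw [map_sub, coeff_sub, sub_eq_zero] at this
  rw [this, taylor_mul, taylor_C, taylor_pow, map_sub, taylor_X, taylor_C, add_sub_cancel_right,
    coeff_C_mul, coeff_X_pow, div_eq_inv_mul]

theorem coeff_taylor_hermiteBasis_right {a b : K} (hab : a ≠ b) {s k : ℕ} (r j : ℕ)
    (hk : k < s) : (taylor b (hermiteBasis a b r s j)).coeff k = 0 :=
  X_sub_C_pow_dvd_iff_taylor_coeff.mp (X_sub_C_pow_dvd_hermiteBasis hab r s j) k hk

theorem eq_hermiteBasis {𝕜 : Type*} [NontriviallyNormedField 𝕜] [CharZero 𝕜] {a b : 𝕜}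
    (hab : a ≠ b) {r s j : ℕ} (hj : j < r) {p : 𝕜[X]} (hp : p.natDegree < r + s)
    (ha : ∀ k < r, iteratedDeriv k (fun t => p.eval t) a / k ! = (if k = j then 1 else 0) / j !)
    (hb : ∀ k < s, iteratedDeriv k (fun t => p.eval t) b = 0) :
    p = hermiteBasis a b r s j := by
  refine eq_of_X_sub_C_pow_dvd_sub hab hp (natDegree_hermiteBasis_lt a b s hj)
    (X_sub_C_pow_dvd_iff_taylor_coeff.mpr fun k hk => ?_)
    (X_sub_C_pow_dvd_iff_taylor_coeff.mpr fun k hk => ?_) <;>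
    rw [map_sub, coeff_sub, ← iteratedDeriv_eval_div_factorial]
  · rw [ha k hk, coeff_taylor_hermiteBasis_left a b s j hk, sub_self]
  · rw [hb k hk, zero_div, coeff_taylor_hermiteBasis_right hab r j hk, sub_self]

theorem hermiteBasis_eval_nonneg [LinearOrder K] [IsStrictOrderedRing K] {a b x : K}
    (hx : x ∈ Set.uIcc a b) (r s j : ℕ) : 0 ≤ (b - a) ^ j * (hermiteBasis a b r s j).eval x := by
  have hu : 0 ≤ (b - a)⁻¹ * (x - a) ∧ (b - a)⁻¹ * (x - a) ≤ 1 ∧ 0 ≤ (b - a) * (x - a) := by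
    rcases Set.mem_uIcc.mp hx with ⟨h1, h2⟩ | ⟨h1, h2⟩
    · exact ⟨mul_nonneg (inv_nonneg.2 (by linarith)) (by linarith),
        inv_mul_le_one_of_le₀ (by linarith) (by linarith), mul_nonneg (by linarith) (by linarith)⟩
    · rw [← neg_sub a b, ← neg_sub a x, inv_neg, neg_mul_neg, neg_mul_neg]
      exact ⟨mul_nonneg (inv_nonneg.2 (by linarith)) (by linarith),
        inv_mul_le_one_of_le₀ (by linarith) (by linarith), mul_nonneg (by linarith) (by linarith)⟩
  obtain ⟨hu0, hu1, hxa⟩ := hu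
  have heval : (b - a) ^ j * (hermiteBasis a b r s j).eval x =
      (j ! : K)⁻¹ * ((b - a) * (x - a)) ^ j * ((1 - (b - a)⁻¹ * (x - a)) ^ s *
        (PowerSeries.trunc (r - j) (PowerSeries.invOneSubPow K s).val).eval
          ((b - a)⁻¹ * (x - a))) := by
    rw [mul_pow]
    simp only [hermiteBasis, eval_mul, eval_pow, eval_sub, eval_C, eval_X, eval_one, eval_comp]
    ring
  rw [heval]
  exact mul_nonneg (mul_nonneg (by positivity) (pow_nonneg hxa j))
    (mul_nonneg (pow_nonneg (sub_nonneg.2 hu1) s)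
      (PowerSeries.eval_trunc_invOneSubPow_nonneg _ s hu0))

/-- The polynomial `P` of the statement: `hermiteBasis b a s r j` is `P_{0,r,s,b,j}`, the basis
polynomial with the roles of the two nodes exchanged. -/
noncomputable def boundaryTailPoly (a b : K) (r s : ℕ) : K[X] :=
  ∑ j ∈ Ico 1 r, hermiteBasis a b r s j + ∑ j ∈ Ico 1 s, C ((-1) ^ j) * hermiteBasis b a s r j

theorem natDegree_boundaryTailPoly_lt (a b : K) {r s : ℕ} (h : 0 < r + s) :
    (boundaryTailPoly a b r s).natDegree < r + s := by
  have hle : (boundaryTailPoly a b r s).natDegree ≤ r + s - 1 := by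
    refine (natDegree_add_le _ _).trans (max_le ?_ ?_) <;>
      refine natDegree_sum_le_of_forall_le _ _ fun j hj => ?_
    · have := natDegree_hermiteBasis_lt a b s (mem_Ico.mp hj).2
      omega
    · have := natDegree_hermiteBasis_lt b a r (mem_Ico.mp hj).2
      have := natDegree_C_mul_le ((-1 : K) ^ j) (hermiteBasis b a s r j)
      omega
  omega

theorem coeff_taylor_boundaryTailPoly_left {a b : K} (hab : a ≠ b) {r k : ℕ} (s : ℕ)
    (hk : k < r) :
    (taylor a (boundaryTailPoly a b r s)).coeff k = if k = 0 then 0 else (k ! : K)⁻¹ := by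
  simp only [boundaryTailPoly, map_add, map_sum, coeff_add, finsetSum_coeff, taylor_mul, taylor_C,
    coeff_C_mul, coeff_taylor_hermiteBasis_left a b s _ hk,
    coeff_taylor_hermiteBasis_right hab.symm s _ hk, ite_div, one_div, zero_div, mul_zero,
    sum_const_zero, add_zero, sum_ite_eq, mem_Ico]
  split_ifs <;> first | rfl | omega

theorem coeff_taylor_boundaryTailPoly_right {a b : K} (hab : a ≠ b) {s k : ℕ} (r : ℕ)
    (hk : k < s) :
    (taylor b (boundaryTailPoly a b r s)).coeff k =
      if k = 0 then 0 else (-1) ^ k * (k ! : K)⁻¹ := by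
  simp only [boundaryTailPoly, map_add, map_sum, coeff_add, finsetSum_coeff, taylor_mul, taylor_C,
    coeff_C_mul, coeff_taylor_hermiteBasis_left b a r _ hk,
    coeff_taylor_hermiteBasis_right hab r _ hk, ite_div, one_div, zero_div, mul_zero,
    sum_const_zero, zero_add, mul_ite, sum_ite_eq, mem_Ico]
  split_ifs <;> first | rfl | omega

theorem boundaryTailPoly_eval_nonneg [LinearOrder K] [IsStrictOrderedRing K] {a b x : K}
    (hab : a < b) (hx : x ∈ Set.Icc a b) (r s : ℕ) : 0 ≤ (boundaryTailPoly a b r s).eval x := by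
  have hx' := Set.Icc_subset_uIcc hx
  have hba := sub_pos.2 hab
  simp only [boundaryTailPoly, eval_add, eval_finsetSum, eval_mul, eval_C]
  refine add_nonneg (sum_nonneg fun j _ => ?_) (sum_nonneg fun j _ => ?_)
  · exact nonneg_of_mul_nonneg_right (hermiteBasis_eval_nonneg hx' r s j) (pow_pos hba j)
  · have := hermiteBasis_eval_nonneg (Set.uIcc_comm a b ▸ hx') s r j
    rw [← neg_sub, neg_pow, mul_assoc, mul_left_comm] at this
    exact nonneg_of_mul_nonneg_right this (pow_pos hba j)

end Polynomial

theorem Finset.sum_range_ite_eq_zero_eq_sum_Ico {M : Type*} [AddCommMonoid M] (f : ℕ → M)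
    (r : ℕ) : ∑ k ∈ range r, (if k = 0 then 0 else f k) = ∑ k ∈ Ico 1 r, f k := by
  rcases r with _ | r
  · simp
  · rw [sum_range_succ', sum_Ico_eq_sum_range]
    simp [add_comm]

section Quadrature

variable {a b : ℝ} {n r s : ℕ} {τ w0 wi w1 : ℕ → ℝ}

theorem quad_eval (hab : a < b) (p : ℝ[X]) :
    quad a b n r s τ w0 wi w1 (fun t => p.eval t) =
      ∑ k ∈ range r, w0 k * (k ! * (taylor a p).coeff k) + ∑ k ∈ range n, wi k * p.eval (τ k)
        + ∑ k ∈ range s, (-1) ^ k * w1 k * (k ! * (taylor b p).coeff k) := by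
  simp only [quad,
    iteratedDerivWithin_eval p _ (uniqueDiffOn_Icc hab) (Set.left_mem_Icc.2 hab.le),
    iteratedDerivWithin_eval p _ (uniqueDiffOn_Icc hab) (Set.right_mem_Icc.2 hab.le),
    iteratedDeriv_eval_eq_factorial_mul_taylor_coeff]

theorem quad_eval_of_dvd (hab : a < b) {p : ℝ[X]} (ha : (X - C a) ^ r ∣ p)
    (hb : (X - C b) ^ s ∣ p) :
    quad a b n r s τ w0 wi w1 (fun t => p.eval t) = ∑ k ∈ range n, wi k * p.eval (τ k) := by
  rw [quad_eval hab, sum_eq_zero, sum_eq_zero (s := range s), zero_add, add_zero] <;>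
    intro k hk
  · rw [X_sub_C_pow_dvd_iff_taylor_coeff.mp hb k (mem_range.mp hk), mul_zero, mul_zero]
  · rw [X_sub_C_pow_dvd_iff_taylor_coeff.mp ha k (mem_range.mp hk), mul_zero, mul_zero]

noncomputable def weightTestPoly (a b : ℝ) (r s n : ℕ) (τ : ℕ → ℝ) (i : ℕ) : ℝ[X] :=
  (X - C a) ^ r * (C b - X) ^ s * ∏ k ∈ (range n).erase i, (X - C (τ k)) ^ 2

variable {i : ℕ}

theorem eval_weightTestPoly (x : ℝ) : (weightTestPoly a b r s n τ i).eval x =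
    (x - a) ^ r * (b - x) ^ s * ∏ k ∈ (range n).erase i, (x - τ k) ^ 2 := by
  simp [weightTestPoly, eval_prod]

theorem natDegree_weightTestPoly_lt (hi : i < n) :
    (weightTestPoly a b r s n τ i).natDegree < 2 * n + r + s := by
  have hprod : (∏ k ∈ (range n).erase i, (X - C (τ k)) ^ 2).natDegree ≤ 2 * (n - 1) := by
    refine (natDegree_prod_le _ _).trans ((sum_le_card_nsmul _ _ 2 fun k _ => ?_).trans ?_)
    · exact natDegree_pow_le_of_le 2 (natDegree_X_sub_C (τ k)).le
    · rw [card_erase_of_mem (mem_range.mpr hi), card_range, smul_eq_mul, mul_comm]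
  have : (weightTestPoly a b r s n τ i).natDegree ≤ r * 1 + s * 1 + 2 * (n - 1) :=
    natDegree_mul_le_of_le (natDegree_mul_le_of_le
      (natDegree_pow_le_of_le r (natDegree_X_sub_C a).le)
      (natDegree_pow_le_of_le s ((natDegree_sub_le _ _).trans (by simp)))) hprod
  omega

theorem weightTestPoly_eval_nonneg {x : ℝ} (hx : x ∈ Set.Icc a b) :
    0 ≤ (weightTestPoly a b r s n τ i).eval x := by
  rw [eval_weightTestPoly]
  exact mul_nonneg
    (mul_nonneg (pow_nonneg (sub_nonneg.2 hx.1) r) (pow_nonneg (sub_nonneg.2 hx.2) s))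
    (prod_nonneg fun k _ => sq_nonneg _)

theorem weightTestPoly_eval_pos (hτi : τ i ∈ Set.Ioo a b) (hinj : Set.InjOn τ (Set.Iio n))
    (hi : i < n) : 0 < (weightTestPoly a b r s n τ i).eval (τ i) := by
  rw [eval_weightTestPoly]
  refine mul_pos (mul_pos (pow_pos (sub_pos.2 hτi.1) r) (pow_pos (sub_pos.2 hτi.2) s))
    (prod_pos fun k hk => ?_)
  obtain ⟨hki, hk⟩ := mem_erase.mp hk
  exact pow_two_pos_of_ne_zero (sub_ne_zero.mpr fun h => hki (hinj (mem_range.mp hk) hi h.symm))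

theorem quad_weightTestPoly (hab : a < b) (hi : i < n) :
    quad a b n r s τ w0 wi w1 (fun t => (weightTestPoly a b r s n τ i).eval t) =
      wi i * (weightTestPoly a b r s n τ i).eval (τ i) := by
  have ha : (X - C a) ^ r ∣ weightTestPoly a b r s n τ i := (dvd_mul_right _ _).mul_right _
  have hb : (X - C b) ^ s ∣ (C b - X) ^ s := by
    rw [← neg_sub X (C b), neg_pow]; exact dvd_mul_left _ _
  refine (quad_eval_of_dvd hab ha ((hb.mul_left _).mul_right _)).trans
    (sum_eq_single_of_mem i (mem_range.mpr hi) fun k hk hki => ?_)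
  rw [eval_weightTestPoly, prod_eq_zero (mem_erase.mpr ⟨hki, hk⟩) (by simp), mul_zero, mul_zero]

theorem quad_interior_weight_nonneg {μ : Measure ℝ} (hab : a < b)
    (hsupp : μ (Set.Icc a b)ᶜ = 0) (hτi : τ i ∈ Set.Ioo a b) (hinj : Set.InjOn τ (Set.Iio n))
    (hexact : ∀ p : ℝ[X], p.natDegree + 1 ≤ 2 * n + r + s →
      quad a b n r s τ w0 wi w1 (fun t => p.eval t) = ∫ t, p.eval t ∂μ)
    (hi : i < n) : 0 ≤ wi i := by
  have hint : 0 ≤ ∫ t, (weightTestPoly a b r s n τ i).eval t ∂μ :=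
    integral_nonneg_of_ae (Filter.mem_of_superset (mem_ae_iff.mpr hsupp)
      fun _ hx => weightTestPoly_eval_nonneg hx)
  rw [← hexact _ (natDegree_weightTestPoly_lt hi), quad_weightTestPoly hab hi] at hint
  exact nonneg_of_mul_nonneg_left hint (weightTestPoly_eval_pos hτi hinj hi)

theorem sum_tail_weights_le_quad (hab : a < b) (hwi : ∀ k < n, 0 ≤ wi k) {P : ℝ[X]}
    (hP : ∀ k < n, 0 ≤ P.eval (τ k))
    (ha : ∀ k < r, (taylor a P).coeff k = if k = 0 then 0 else (k ! : ℝ)⁻¹)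
    (hb : ∀ k < s, (taylor b P).coeff k = if k = 0 then 0 else (-1) ^ k * (k ! : ℝ)⁻¹) :
    ∑ j ∈ Ico 1 r, w0 j + ∑ j ∈ Ico 1 s, w1 j ≤
      quad a b n r s τ w0 wi w1 (fun t => P.eval t) := by
  have hfac (k : ℕ) : (k ! : ℝ) ≠ 0 := Nat.cast_ne_zero.mpr k.factorial_ne_zero
  have ha' : ∑ k ∈ range r, w0 k * (k ! * (taylor a P).coeff k) = ∑ j ∈ Ico 1 r, w0 j := by
    rw [← sum_range_ite_eq_zero_eq_sum_Ico]
    refine sum_congr rfl fun k hk => ?_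
    rw [ha k (mem_range.mp hk)]
    split_ifs
    · simp
    · rw [mul_inv_cancel₀ (hfac k), mul_one]
  have hb' : ∑ k ∈ range s, (-1) ^ k * w1 k * (k ! * (taylor b P).coeff k) =
      ∑ j ∈ Ico 1 s, w1 j := by
    rw [← sum_range_ite_eq_zero_eq_sum_Ico]
    refine sum_congr rfl fun k hk => ?_
    rw [hb k (mem_range.mp hk)]
    split_ifs
    · simp
    · field_simp
      rw [← pow_mul, pow_mul', neg_one_sq, one_pow, one_mul]
  rw [quad_eval hab, ha', hb']
  have := sum_nonneg fun k hk => mul_nonneg (hwi k (mem_range.mp hk)) (hP k (mem_range.mp hk))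
  linarith

end Quadrature

theorem boundary_weights_tail_bound_general
    (a b : ℝ) (hab : a < b)
    (μ : Measure ℝ)
    (hsupp : μ (Set.Icc a b)ᶜ = 0)
    (r s : ℕ) (hr : 1 ≤ r)
    (pA pB : ℕ → Polynomial ℝ)
    (hpAdeg : ∀ j, 1 ≤ j → j ≤ r - 1 → (pA j).natDegree + 1 ≤ r + s)
    (hpAa : ∀ j, 1 ≤ j → j ≤ r - 1 → ∀ k < r,
      iteratedDeriv k (fun t => (pA j).eval t) a / (k.factorial : ℝ)
        = (if k = j then 1 else 0) / (j.factorial : ℝ))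
    (hpAb : ∀ j, 1 ≤ j → j ≤ r - 1 → ∀ k < s,
      iteratedDeriv k (fun t => (pA j).eval t) b = 0)
    (hpBdeg : ∀ j, 1 ≤ j → j ≤ s - 1 → (pB j).natDegree + 1 ≤ r + s)
    (hpBb : ∀ j, 1 ≤ j → j ≤ s - 1 → ∀ k < s,
      iteratedDeriv k (fun t => (pB j).eval t) b / (k.factorial : ℝ)
        = (if k = j then 1 else 0) / (j.factorial : ℝ))
    (hpBa : ∀ j, 1 ≤ j → j ≤ s - 1 → ∀ k < r,
      iteratedDeriv k (fun t => (pB j).eval t) a = 0) :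
    (∀ x ∈ Set.Icc a b,
      0 ≤ (∑ j ∈ Finset.Ico 1 r, (pA j).eval x)
          + (∑ j ∈ Finset.Ico 1 s, (-1 : ℝ) ^ j * (pB j).eval x)) ∧
    (∀ n : ℕ, ∀ τ w0 wi w1 : ℕ → ℝ,
      (∀ j < n, τ j ∈ Set.Ioo a b) →
      (∀ i j, i < j → j < n → τ i < τ j) →
      (∀ p : Polynomial ℝ, p.natDegree + 1 ≤ 2 * n + r + s →
        quad a b n r s τ w0 wi w1 (fun t => p.eval t) = ∫ t, p.eval t ∂μ) →
      (∑ j ∈ Finset.Ico 1 r, w0 j) + (∑ j ∈ Finset.Ico 1 s, w1 j)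
        ≤ ∫ t, ((∑ j ∈ Finset.Ico 1 r, (pA j).eval t)
            + (∑ j ∈ Finset.Ico 1 s, (-1 : ℝ) ^ j * (pB j).eval t)) ∂μ) := by
  have hpA : ∀ j ∈ Ico 1 r, pA j = hermiteBasis a b r s j := fun j hj => by
    obtain ⟨h1, h2⟩ := mem_Ico.mp hj
    exact eq_hermiteBasis hab.ne h2 (hpAdeg j h1 (by omega)) (hpAa j h1 (by omega))
      (hpAb j h1 (by omega))
  have hpB : ∀ j ∈ Ico 1 s, pB j = hermiteBasis b a s r j := fun j hj => by
    obtain ⟨h1, h2⟩ := mem_Ico.mp hj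
    exact eq_hermiteBasis hab.ne' h2 (by have := hpBdeg j h1 (by omega); omega)
      (hpBb j h1 (by omega)) (hpBa j h1 (by omega))
  have hP (x : ℝ) : ∑ j ∈ Ico 1 r, (pA j).eval x + ∑ j ∈ Ico 1 s, (-1 : ℝ) ^ j * (pB j).eval x
      = (boundaryTailPoly a b r s).eval x := by
    simp only [boundaryTailPoly, eval_add, eval_finsetSum, eval_mul, eval_C]
    congr 1 <;> refine sum_congr rfl fun j hj => ?_
    · rw [hpA j hj]
    · rw [hpB j hj]
  simp only [hP]
  refine ⟨fun x hx => boundaryTailPoly_eval_nonneg hab hx r s,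
    fun n τ w0 wi w1 hτ hmono hexact => ?_⟩
  have hinj : Set.InjOn τ (Set.Iio n) :=
    StrictMonoOn.injOn fun i _ j hj hij => hmono i j hij hj
  calc _ ≤ quad a b n r s τ w0 wi w1 (fun t => (boundaryTailPoly a b r s).eval t) :=
        sum_tail_weights_le_quad hab
          (fun k hk => quad_interior_weight_nonneg hab hsupp (hτ k hk) hinj hexact hk)
          (fun k hk => boundaryTailPoly_eval_nonneg hab (Set.Ioo_subset_Icc_self (hτ k hk)) r s)
          (fun k hk => coeff_taylor_boundaryTailPoly_left hab.ne s hk)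
          (fun k hk => coeff_taylor_boundaryTailPoly_right hab.ne r hk)
    _ = _ := hexact _ <| by
      linarith [natDegree_boundaryTailPoly_lt a b (r := r) (s := s) (by omega)]

/-- with `P = Σ_{j=1}^{r-1} P_{0,r,s,a,j} + Σ_{j=1}^{s-1} (-1)^j P_{0,r,s,b,j}`,
where `pA j = P_{0,r,s,a,j}` and `pB j = P_{0,r,s,b,j}` are the Hermite–Lagrange
polynomials of degree `≤ r+s-1` for the nodes `a` (multiplicity `r`) and `b`
(multiplicity `s`), the polynomial `P` is nonnegative on `[a,b]` and, for every `n` and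
every exact quadrature `Q_{n,r,s}`,
`Σ_{j=1}^{r-1} λ₀^{(j)}(n) + Σ_{j=1}^{s-1} λ_{n+1}^{(j)}(n) ≤ ∫ P dλ`. -/
theorem boundary_weights_tail_bound
    (a b : ℝ) (hab : a < b)
    (μ : Measure ℝ) [IsFiniteMeasure μ]
    (hsupp : μ (Set.Icc a b)ᶜ = 0)
    (hinf : {x | x ∈ Set.Ioo a b ∧ ∀ ε > 0, 0 < μ (Set.Ioo (x - ε) (x + ε))}.Infinite)
    (r s : ℕ) (hr : 1 ≤ r) (hs : 1 ≤ s)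
    (pA pB : ℕ → Polynomial ℝ)
    (hpAdeg : ∀ j, 1 ≤ j → j ≤ r - 1 → (pA j).natDegree + 1 ≤ r + s)
    (hpAa : ∀ j, 1 ≤ j → j ≤ r - 1 → ∀ k < r,
      iteratedDeriv k (fun t => (pA j).eval t) a / (k.factorial : ℝ)
        = (if k = j then 1 else 0) / (j.factorial : ℝ))
    (hpAb : ∀ j, 1 ≤ j → j ≤ r - 1 → ∀ k < s,
      iteratedDeriv k (fun t => (pA j).eval t) b = 0)
    (hpBdeg : ∀ j, 1 ≤ j → j ≤ s - 1 → (pB j).natDegree + 1 ≤ r + s)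
    (hpBb : ∀ j, 1 ≤ j → j ≤ s - 1 → ∀ k < s,
      iteratedDeriv k (fun t => (pB j).eval t) b / (k.factorial : ℝ)
        = (if k = j then 1 else 0) / (j.factorial : ℝ))
    (hpBa : ∀ j, 1 ≤ j → j ≤ s - 1 → ∀ k < r,
      iteratedDeriv k (fun t => (pB j).eval t) a = 0) :
    (∀ x ∈ Set.Icc a b,
      0 ≤ (∑ j ∈ Finset.Ico 1 r, (pA j).eval x)
          + (∑ j ∈ Finset.Ico 1 s, (-1 : ℝ) ^ j * (pB j).eval x)) ∧
    (∀ n : ℕ, ∀ τ w0 wi w1 : ℕ → ℝ,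
      (∀ j < n, τ j ∈ Set.Ioo a b) →
      (∀ i j, i < j → j < n → τ i < τ j) →
      (∀ p : Polynomial ℝ, p.natDegree + 1 ≤ 2 * n + r + s →
        quad a b n r s τ w0 wi w1 (fun t => p.eval t) = ∫ t, p.eval t ∂μ) →
      (∑ j ∈ Finset.Ico 1 r, w0 j) + (∑ j ∈ Finset.Ico 1 s, w1 j)
        ≤ ∫ t, ((∑ j ∈ Finset.Ico 1 r, (pA j).eval t)
            + (∑ j ∈ Finset.Ico 1 s, (-1 : ℝ) ^ j * (pB j).eval t)) ∂μ) :=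
  boundary_weights_tail_bound_general a b hab μ hsupp r s hr pA pB hpAdeg hpAa hpAb hpBdeg hpBb hpBa
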